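/- Let X̂, Ŷ ∈ X̂_k(ℂⁿ,0), k ≥ 1, be formal vector fields of the same order k+1, with X̂ regular dicritic and Ŷ dicritic. If [X̂,Ŷ] = 0 then there exists c ∈ ℂ, c ≠ 0, such that Ŷ = c·X̂. -/

import Mathlib

noncomputable section

namespace FormalGroups

/-- Formal power series in `n` complex variables: `ℂ[[z₁,…,zₙ]]`. -/
abbrev FPS (n : ℕ) := MvPowerSeries (Fin n) ℂ

/-- Formal vector fields on `(ℂⁿ,0)`: derivations of `ℂ[[z₁,…,zₙ]]`. -/
abbrev FVF (n : ℕ) := Derivation ℂ (FPS n) (FPS n)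

/-- The group of formal diffeomorphisms of `(ℂⁿ,0)`, encoded (isomorphically,
via the pullback action on power series) as the opposite of the group of
`ℂ`-algebra automorphisms of `ℂ[[z₁,…,zₙ]]`.  For `f : FDiff n`, `f.unop` is
the pullback `h ↦ h ∘ f`; multiplication `f * g` corresponds to the
composition `f ∘ g` of formal diffeomorphisms. -/
abbrev FDiff (n : ℕ) := (FPS n ≃ₐ[ℂ] FPS n)ᵐᵒᵖ

/-- The coordinate power series `zᵢ`. -/
def Z {n : ℕ} (i : Fin n) : FPS n := MvPowerSeries.X i

/-- The `i`-th component power series `f̂ᵢ` of a formal diffeomorphism. -/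
def comp {n : ℕ} (f : FDiff n) (i : Fin n) : FPS n := f.unop (Z i)

/-- Total degree of a monomial exponent. -/
def deg {n : ℕ} (d : Fin n →₀ ℕ) : ℕ := d.sum fun _ m => m

/-- A formal vector field belongs to `X̂(ℂⁿ,0)`: its coefficients vanish at `0`. -/
def VanishesAtZero {n : ℕ} (X : FVF n) : Prop :=
  ∀ i, MvPowerSeries.constantCoeff (σ := Fin n) (R := ℂ) (X (Z i)) = 0

/-- `f` is tangent to the identity: `f(z) = z + (order ≥ 2)`. -/
def TangentToId {n : ℕ} (f : FDiff n) : Prop :=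
  (∀ i, MvPowerSeries.constantCoeff (σ := Fin n) (R := ℂ) (comp f i) = 0) ∧
  ∀ i j, MvPowerSeries.coeff (R := ℂ) (Finsupp.single j 1) (comp f i) = if j = i then 1 else 0

/-- `f = exp (t X)`, expressed coefficientwise: `f̂ᵢ = Σ_j (tʲ/j!) X̂ʲ(zᵢ)`. -/
def IsExpT {n : ℕ} (f : FDiff n) (t : ℂ) (X : FVF n) : Prop :=
  ∀ i d, MvPowerSeries.coeff (R := ℂ) d (comp f i) =
    ∑' j : ℕ, (t ^ j / (Nat.factorial j : ℂ)) * MvPowerSeries.coeff (R := ℂ) d ((⇑X)^[j] (Z i))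

/-- `f = exp X`. -/
def IsExp {n : ℕ} (f : FDiff n) (X : FVF n) : Prop := IsExpT f 1 X

/-- The vector field `X` is invariant by the formal diffeomorphism `f`
(`f_* X = X`), i.e. `X` commutes with the pullback of `f`. -/
def InvariantBy {n : ℕ} (f : FDiff n) (X : FVF n) : Prop :=
  ∀ h, X (f.unop h) = f.unop (X h)

/-- `f_* X = c • X`  (projective invariance, with factor `c`). -/
def ProjInvariantBy {n : ℕ} (f : FDiff n) (X : FVF n) (c : ℂ) : Prop :=
  ∀ h, X (f.unop h) = c • f.unop (X h)

/-- The two vector fields commute: `[X,Y] = 0`. -/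
def CommuteVF {n : ℕ} (X Y : FVF n) : Prop := ∀ h, X (Y h) = Y (X h)

/-- All terms of the power series have degree at least `m`. -/
def OrderGE {n : ℕ} (F : FPS n) (m : ℕ) : Prop :=
  ∀ d, deg d < m → MvPowerSeries.coeff (R := ℂ) d F = 0

/-- The vector field vanishes to order at least `m` at the origin. -/
def VFOrderGE {n : ℕ} (X : FVF n) (m : ℕ) : Prop := ∀ i, OrderGE (X (Z i)) m

/-- `f` is tangent to the identity with order (exactly) `k`:
`f(z) = z + f_{k+1}(z) + ⋯` with `f_{k+1} ≠ 0`. -/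
def TangentOrder {n : ℕ} (f : FDiff n) (k : ℕ) : Prop :=
  1 ≤ k ∧
  (∀ i d, deg d ≤ k → MvPowerSeries.coeff (R := ℂ) d (comp f i) = MvPowerSeries.coeff (R := ℂ) d (Z i)) ∧
  ∃ i d, deg d = k + 1 ∧ MvPowerSeries.coeff (R := ℂ) d (comp f i) ≠ 0

/-- A dicritic diffeomorphism of order `k`: `f(z) = z + p(z)·z + (order ≥ k+2)`,
with `p ≠ 0` homogeneous of degree `k`. -/
def IsDicriticDiffeo {n : ℕ} (f : FDiff n) (k : ℕ) : Prop :=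
  1 ≤ k ∧
  (∀ i d, deg d ≤ k → MvPowerSeries.coeff (R := ℂ) d (comp f i) = MvPowerSeries.coeff (R := ℂ) d (Z i)) ∧
  ∃ p : MvPolynomial (Fin n) ℂ, p.IsHomogeneous k ∧ p ≠ 0 ∧
    ∀ i d, deg d = k + 1 →
      MvPowerSeries.coeff (R := ℂ) d (comp f i) = MvPowerSeries.coeff (R := ℂ) d ((p : FPS n) * Z i)

/-- A dicritic vector field of index `k` (order `k+1`):
`X = p(z)·R⃗ + (order ≥ k+2)` with `p ≠ 0` homogeneous of degree `k`,
where `R⃗ = Σ zᵢ ∂/∂zᵢ` is the radial vector field. -/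
def IsDicriticVF {n : ℕ} (X : FVF n) (k : ℕ) : Prop :=
  1 ≤ k ∧ VFOrderGE X (k + 1) ∧
  ∃ p : MvPolynomial (Fin n) ℂ, p.IsHomogeneous k ∧ p ≠ 0 ∧
    ∀ i d, deg d = k + 1 →
      MvPowerSeries.coeff (R := ℂ) d (X (Z i)) = MvPowerSeries.coeff (R := ℂ) d ((p : FPS n) * Z i)

/-- A regular dicritic vector field of index `k`: dicritic, and for the
homogeneous parts `pᵢ = q i` of degree `k+2` there are indices `i₀, j₀` with
`p` and `z_{j₀} q_{i₀} − z_{i₀} q_{j₀}` coprime. -/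
def IsRegDicriticVF {n : ℕ} (X : FVF n) (k : ℕ) : Prop :=
  1 ≤ k ∧ VFOrderGE X (k + 1) ∧
  ∃ (p : MvPolynomial (Fin n) ℂ) (q : Fin n → MvPolynomial (Fin n) ℂ),
    p.IsHomogeneous k ∧ p ≠ 0 ∧
    (∀ i d, deg d = k + 1 →
      MvPowerSeries.coeff (R := ℂ) d (X (Z i)) = MvPowerSeries.coeff (R := ℂ) d ((p : FPS n) * Z i)) ∧
    (∀ i, (q i).IsHomogeneous (k + 2)) ∧
    (∀ i d, deg d = k + 2 →
      MvPowerSeries.coeff (R := ℂ) d (X (Z i)) = MvPolynomial.coeff d (q i)) ∧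
    ∃ i₀ j₀ : Fin n,
      IsRelPrime p (MvPolynomial.X j₀ * q i₀ - MvPolynomial.X i₀ * q j₀)

/-- A regular dicritic diffeomorphism: its infinitesimal generator
`log f` is a regular dicritic vector field. -/
def IsRegDicriticDiffeo {n : ℕ} (f : FDiff n) (k : ℕ) : Prop :=
  ∃ X : FVF n, IsRegDicriticVF X k ∧ IsExp f X

/-- The derivative (linear part) `Df(0)` of `f` at `0`, as a matrix. -/
def Dmat {n : ℕ} (f : FDiff n) : Matrix (Fin n) (Fin n) ℂ :=
  Matrix.of fun i j => MvPowerSeries.coeff (R := ℂ) (Finsupp.single j 1) (comp f i)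

/-- `L` is the linear diffeomorphism `z ↦ M z`. -/
def IsLinearWith {n : ℕ} (L : FDiff n) (M : Matrix (Fin n) (Fin n) ℂ) : Prop :=
  ∀ i, comp L i = ∑ j, M i j • Z j

/-- Formal partial derivative `∂/∂zᵢ` on `ℂ[[z₁,…,zₙ]]`. -/
def pd {n : ℕ} (i : Fin n) (F : FPS n) : FPS n :=
  fun d => ((d i : ℂ) + 1) * MvPowerSeries.coeff (R := ℂ) (d + Finsupp.single i 1) F

/-- A formal meromorphic one-form `Σⱼ (Aⱼ/C) dzⱼ`, presented with a common
denominator `C ≠ 0` (its coefficients are elements `Aⱼ/C` of the fraction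
field `K̂ₙ` of `ℂ[[z₁,…,zₙ]]`). -/
structure MeroForm (n : ℕ) where
  A : Fin n → FPS n
  C : FPS n
  hC : C ≠ 0

/-- The one-form is closed (`dω = 0`), with denominators cleared. -/
def FormClosed {n : ℕ} (ω : MeroForm n) : Prop :=
  ∀ i j, pd i (ω.A j) * ω.C - ω.A j * pd i ω.C = pd j (ω.A i) * ω.C - ω.A i * pd j ω.C

/-- `g*ω = ω` (invariance of the one-form under pullback), denominators cleared. -/
def FormInvariantBy {n : ℕ} (g : FDiff n) (ω : MeroForm n) : Prop :=
  ∀ j, (∑ i, g.unop (ω.A i) * pd j (comp g i)) * ω.C = ω.A j * g.unop ω.C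

/-- `g*ω = a ω₁ + b ω₂`, denominators cleared. -/
def FormPullbackComb {n : ℕ} (g : FDiff n) (ω ω₁ ω₂ : MeroForm n) (a b : ℂ) : Prop :=
  ∀ j, (∑ i, g.unop (ω.A i) * pd j (comp g i)) * (ω₁.C * ω₂.C)
    = (a • (ω₁.A j * ω₂.C) + b • (ω₂.A j * ω₁.C)) * g.unop ω.C

/-- `ω₁, ω₂` are `ℂ`-linearly independent as meromorphic one-forms. -/
def FormsIndepC {n : ℕ} (ω₁ ω₂ : MeroForm n) : Prop :=
  ∀ a b : ℂ, (∀ j, a • (ω₁.A j * ω₂.C) + b • (ω₂.A j * ω₁.C) = 0) → a = 0 ∧ b = 0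

/-- A formal curve: a nonzero non-invertible formal series. -/
def IsFormalCurve (φ : FPS 2) : Prop :=
  φ ≠ 0 ∧ MvPowerSeries.constantCoeff (σ := Fin 2) (R := ℂ) φ = 0

/-- The formal curve `φ` is invariant by `f`: `φ ∘ f = u·φ` for a unit `u`. -/
def CurveInvariantBy (f : FDiff 2) (φ : FPS 2) : Prop :=
  ∃ u : FPS 2, IsUnit u ∧ f.unop φ = u * φ

/-- Linear coefficient of `φ` in the variable `zᵢ` (the differential `Dφ(0)`). -/
def lc (i : Fin 2) (φ : FPS 2) : ℂ := MvPowerSeries.coeff (R := ℂ) (Finsupp.single i 1) φ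

/-- The formal curves `φ, ψ` are transverse: each tangent space (kernel of the
differential at `0`) is one-dimensional and together they span `ℂ²`;
equivalently the two differentials at `0` are linearly independent. -/
def Transverse (φ ψ : FPS 2) : Prop :=
  lc 0 φ * lc 1 ψ - lc 1 φ * lc 0 ψ ≠ 0

/-- The formal power series is convergent (defines a germ of holomorphic
function): its coefficients grow at most geometrically. -/
def IsConvergent {n : ℕ} (F : FPS n) : Prop :=
  ∃ M A : ℝ, ∀ d, ‖MvPowerSeries.coeff (R := ℂ) d F‖ ≤ M * A ^ deg d

/-- `g* X = (p/q)·X`, denominators cleared: the pullback `g* X = (g⁻¹)_* X`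
of the vector field `X` equals the rational multiple `(p/q) X`. -/
def PullbackEqRat {n : ℕ} (g : FDiff n) (X : FVF n) (p q : FPS n) : Prop :=
  ∀ h, q * g.unop (X (g.unop.symm h)) = p * X h

/-- `g* X = s X₁ + t X₂` (pullback of `X` is a constant combination). -/
def PullbackEqComb {n : ℕ} (g : FDiff n) (X X₁ X₂ : FVF n) (s t : ℂ) : Prop :=
  ∀ h, g.unop (X (g.unop.symm h)) = s • X₁ h + t • X₂ h

end FormalGroups

/-!
Write `X = p R + Q + ⋯` and `Y = p' R + Q' + ⋯`, where `R = ∑ zᵢ ∂ᵢ` is the radial field and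
`Q = ∑ qᵢ ∂ᵢ`, `Q'` collect the coefficients of degree `k + 2`. A derivation of `ℂ[[z]]` is
determined by its values on the `zᵢ`, so `[X, Y] = 0` can be read off degree by degree on the
coordinates, where by Euler's identity `R` multiplies a homogeneous series by its degree. In
degree `2k + 2` this gives `(k + 1) (p Q'ᵢ - p' qᵢ) = (Q' p - Q p') zᵢ`; eliminating the
right-hand side between the indices `i₀, j₀` shows `p ∣ p' (z_{j₀} q_{i₀} - z_{i₀} q_{j₀})`, hence `p ∣ p'` by coprimality
and `p' = c p` by homogeneity. Then `D = Y - c X` commutes with `X` and has order `≥ k + 2`. If its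
lowest part `W` has coefficients of degree `M + 1 > k + 1`, then `[p R, W] = 0` reads
`M p wᵢ = (W p) zᵢ`; contracting with `∂ᵢ p` gives `(M - k) p (W p) = 0`, so `W p = 0` and
`W = 0`. Hence `D = 0`.
-/

namespace MvPolynomial

theorem IsHomogeneous.exists_eq_smul_of_dvd {σ R : Type*} [CommRing R] [IsDomain R]
    {p p' : MvPolynomial σ R} {k : ℕ} (hp : p.IsHomogeneous k) (hp' : p'.IsHomogeneous k)
    (hp'0 : p' ≠ 0) (h : p ∣ p') : ∃ c : R, c ≠ 0 ∧ p' = c • p := by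
  obtain ⟨u, rfl⟩ := h
  have hp0 : p ≠ 0 := left_ne_zero_of_mul hp'0
  have hu0 : u ≠ 0 := right_ne_zero_of_mul hp'0
  have hu : u.totalDegree = 0 := by
    have := totalDegree_mul_of_isDomain hp0 hu0
    rw [hp'.totalDegree hp'0, hp.totalDegree hp0] at this
    omega
  refine ⟨coeff 0 u, fun hc => hu0 ?_, ?_⟩
  · rw [totalDegree_eq_zero_iff_eq_C.mp hu, hc, C_0]
  · conv_lhs => rw [totalDegree_eq_zero_iff_eq_C.mp hu]
    rw [smul_eq_C_mul, mul_comm]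

end MvPolynomial

namespace MvPowerSeries

open Finsupp

variable {σ R : Type*} [CommRing R]

theorem homogeneousComponent_mul_of_le_order_succ {f g : MvPowerSeries σ R} {a b : ℕ}
    (hf : a ≤ f.order) (hg : b ≤ g.order) :
    homogeneousComponent (a + b + 1) (f * g) =
      homogeneousComponent a f * homogeneousComponent (b + 1) g +
        homogeneousComponent (a + 1) f * homogeneousComponent b g := by
  classical
  ext d
  simp only [map_add, coeff_homogeneousComponent, coeff_mul, ← Finset.sum_add_distrib]
  split_ifs with hd
  · refine Finset.sum_congr rfl fun x hx => ?_
    have hdeg : x.1.degree + x.2.degree = a + b + 1 := by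
      rw [← map_add, Finset.HasAntidiagonal.mem_antidiagonal.mp hx, hd]
    have hfx : x.1.degree < a → coeff x.1 f = 0 := fun h =>
      coeff_of_lt_order (lt_of_lt_of_le (by exact_mod_cast h) hf)
    have hgx : x.2.degree < b → coeff x.2 g = 0 := fun h =>
      coeff_of_lt_order (lt_of_lt_of_le (by exact_mod_cast h) hg)
    rcases lt_trichotomy x.1.degree a with h | h | h
    · simp [hfx h]
    · simp [h, show x.2.degree = b + 1 by omega]
    · rcases eq_or_lt_of_le (Nat.succ_le_of_lt h) with h' | h'
      · simp [← h', show x.2.degree = b by omega]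
      · simp [hgx (by omega)]
  · refine (Finset.sum_eq_zero fun x hx => ?_).symm
    have hdeg : x.1.degree + x.2.degree = d.degree := by
      rw [← map_add, Finset.HasAntidiagonal.mem_antidiagonal.mp hx]
    split_ifs <;> first | omega | simp

theorem homogeneousComponent_pderiv (m : ℕ) (i : σ) (f : MvPowerSeries σ R) :
    homogeneousComponent m (pderiv R i f) = pderiv R i (homogeneousComponent (m + 1) f) := by
  ext d
  simp [coeff_homogeneousComponent, coeff_pderiv]

theorem le_order_pderiv {f : MvPowerSeries σ R} {m : ℕ} (hf : ((m + 1 : ℕ) : ℕ∞) ≤ f.order)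
    (i : σ) : (m : ℕ∞) ≤ (pderiv R i f).order :=
  nat_le_order fun d hd => by
    rw [coeff_pderiv, coeff_of_lt_order (lt_of_lt_of_le _ hf), zero_mul]
    simpa using hd

theorem succ_le_order_of_homogeneousComponent_eq_zero {f : MvPowerSeries σ R} {m : ℕ}
    (hf : (m : ℕ∞) ≤ f.order) (hm : homogeneousComponent m f = 0) :
    ((m + 1 : ℕ) : ℕ∞) ≤ f.order :=
  nat_le_order fun d hd => by
    rcases Nat.lt_succ_iff_lt_or_eq.mp hd with h | h
    · exact coeff_of_lt_order (lt_of_lt_of_le (by exact_mod_cast h) hf)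
    · simpa [coeff_homogeneousComponent, h] using congr(coeff d $hm)

theorem succ_le_order_sub {f g : MvPowerSeries σ R} {m : ℕ} (hf : (m : ℕ∞) ≤ f.order)
    (hg : (m : ℕ∞) ≤ g.order) (h : homogeneousComponent m f = homogeneousComponent m g) :
    ((m + 1 : ℕ) : ℕ∞) ≤ (f - g).order :=
  succ_le_order_of_homogeneousComponent_eq_zero
    (nat_le_order fun d hd => by
      rw [map_sub, coeff_of_lt_order (lt_of_lt_of_le (by exact_mod_cast hd) hf),
        coeff_of_lt_order (lt_of_lt_of_le (by exact_mod_cast hd) hg), sub_zero])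
    (by rw [map_sub, h, sub_self])

theorem homogeneousComponent_eq {f g : MvPowerSeries σ R} {m : ℕ} (hg : g.IsHomogeneous m)
    (h : ∀ d, d.degree = m → coeff d f = coeff d g) : homogeneousComponent m f = g := by
  ext d
  rw [coeff_homogeneousComponent]
  split_ifs with hd
  · exact h d hd
  · exact (hg.coeff_eq_zero hd).symm

theorem _root_.MvPolynomial.IsHomogeneous.toMvPowerSeries {P : MvPolynomial σ R} {m : ℕ}
    (hP : P.IsHomogeneous m) : (P : MvPowerSeries σ R).IsHomogeneous m := fun hd =>
  hP (by rwa [MvPolynomial.coeff_coe] at hd)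

theorem exists_coe_eq_of_isHomogeneous [Finite σ] {f : MvPowerSeries σ R} {m : ℕ}
    (hf : f.IsHomogeneous m) : ∃ P : MvPolynomial σ R, (P : MvPowerSeries σ R) = f := by
  refine ⟨truncTotal (m + 1) f, ext fun d => ?_⟩
  rw [MvPolynomial.coeff_coe, coeff_truncTotal_eq_ite]
  split_ifs with hd
  · rfl
  · exact (hf.coeff_eq_zero (by omega)).symm

theorem coeff_X_mul_pderiv (i : σ) (f : MvPowerSeries σ R) (d : σ →₀ ℕ) :
    coeff d (X i * pderiv R i f) = d i • coeff d f := by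
  classical
  rw [X, coeff_monomial_mul, one_mul]
  split_ifs with h
  · rw [coeff_pderiv, tsub_add_cancel_of_le h, nsmul_eq_mul', tsub_apply, single_eq_same,
      Nat.cast_sub (single_le_iff.mp h), Nat.cast_one, sub_add_cancel]
  · rw [show d i = 0 by simpa [single_le_iff] using h, zero_smul]

variable [Fintype σ]

theorem exists_eq_C_add_sum_X_mul (f : MvPowerSeries σ R) :
    ∃ h : σ → MvPowerSeries σ R, f = C (constantCoeff f) + ∑ i, X i * h i := by
  classical
  let _ : LinearOrder σ := IsWellOrder.linearOrder WellOrderingRel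
  -- `piece i` collects the monomials whose least variable (for some well-order) is `Xᵢ`
  let piece : σ → MvPowerSeries σ R := fun i d =>
    if ∃ hd : d.support.Nonempty, d.support.min' hd = i then coeff d f else 0
  have hdvd : ∀ i, X i ∣ piece i := fun i => X_dvd_iff.mpr fun d hdi => by
    refine if_neg ?_
    rintro ⟨hd, rfl⟩
    exact mem_support_iff.mp (d.support.min'_mem hd) hdi
  choose h hh using hdvd
  refine ⟨h, ?_⟩
  ext d
  rw [map_add, map_sum, coeff_C]
  simp_rw [← hh]
  show _ = _ + ∑ i, (if ∃ hd : d.support.Nonempty, d.support.min' hd = i then coeff d f else 0)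
  by_cases hd : d = 0
  · simp [hd]
  · have hne : d.support.Nonempty := support_nonempty_iff.mpr hd
    simp [hd, hne]

theorem derivation_ext {D₁ D₂ : Derivation R (MvPowerSeries σ R) (MvPowerSeries σ R)}
    (h : ∀ i, D₁ (X i) = D₂ (X i)) : D₁ = D₂ := by
  set D := D₁ - D₂
  have hX : ∀ i, D (X i) = 0 := fun i => by simp [D, h]
  -- `D f = ∑ Xᵢ D(hᵢ)` raises the order of `D f` above that of the `D hᵢ`
  have hord : ∀ N : ℕ, ∀ f, (N : ℕ∞) ≤ (D f).order := by
    intro N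
    induction N with
    | zero => simp
    | succ N ih =>
      intro f
      obtain ⟨h, hf⟩ := exists_eq_C_add_sum_X_mul f
      have hDf : D f = ∑ i, X i * D (h i) := by
        rw [hf, D.map_add, c_eq_algebraMap, D.map_algebraMap, zero_add, map_sum]
        refine Finset.sum_congr rfl fun i _ => ?_
        rw [D.leibniz, hX, smul_zero, add_zero, smul_eq_mul]
      rw [hDf]
      refine Finset.sum_induction _ (fun g : MvPowerSeries σ R => ((N + 1 : ℕ) : ℕ∞) ≤ g.order)
        (fun a b ha hb => le_trans (le_min ha hb) min_order_le_add) (by simp) fun i _ => ?_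
      calc ((N + 1 : ℕ) : ℕ∞) = 1 + N := by push_cast; ring
        _ ≤ (X i : MvPowerSeries σ R).order + (D (h i)).order := by
          gcongr
          · exact one_le_order_iff_constCoeff_eq_zero.mpr (constantCoeff_X i)
          · exact ih _
        _ ≤ _ := le_order_mul
  ext1 f
  rw [← sub_eq_zero, ← Derivation.sub_apply, ← order_eq_top_iff]
  exact ENat.eq_top_iff_forall_ge.mpr fun N => hord N f

def vectorField (u : σ → MvPowerSeries σ R) :
    Derivation R (MvPowerSeries σ R) (MvPowerSeries σ R) :=
  ∑ i, u i • pderiv R i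

theorem vectorField_apply (u : σ → MvPowerSeries σ R) (f : MvPowerSeries σ R) :
    vectorField u f = ∑ i, u i * pderiv R i f := by
  rw [vectorField, ← Derivation.coeFnAddMonoidHom_apply, map_sum, Finset.sum_apply]
  rfl

theorem vectorField_X (u : σ → MvPowerSeries σ R) (i : σ) : vectorField u (X i) = u i := by
  classical
  simp [vectorField_apply, pderiv_X, Pi.single_apply]

theorem eq_vectorField (D : Derivation R (MvPowerSeries σ R) (MvPowerSeries σ R)) :
    D = vectorField fun i => D (X i) :=
  derivation_ext fun i => (vectorField_X (fun i => D (X i)) i).symm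

def radial : Derivation R (MvPowerSeries σ R) (MvPowerSeries σ R) :=
  vectorField X

theorem IsHomogeneous.radial_apply {f : MvPowerSeries σ R} {m : ℕ} (hf : f.IsHomogeneous m) :
    radial f = m • f := by
  ext d
  simp only [radial, vectorField_apply, map_sum, coeff_X_mul_pderiv, ← Finset.sum_smul,
    ← degree_eq_sum, map_nsmul]
  by_cases hd : d.degree = m
  · rw [hd]
  · rw [hf.coeff_eq_zero hd, smul_zero, smul_zero]

def homogeneousComponentVF (m : ℕ)
    (D : Derivation R (MvPowerSeries σ R) (MvPowerSeries σ R)) :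
    Derivation R (MvPowerSeries σ R) (MvPowerSeries σ R) :=
  vectorField fun i => homogeneousComponent m (D (X i))

theorem homogeneousComponentVF_X (m : ℕ)
    (D : Derivation R (MvPowerSeries σ R) (MvPowerSeries σ R)) (i : σ) :
    homogeneousComponentVF m D (X i) = homogeneousComponent m (D (X i)) :=
  vectorField_X _ i

section OrderedVectorFields

variable {D : Derivation R (MvPowerSeries σ R) (MvPowerSeries σ R)} {a b : ℕ}
  {g : MvPowerSeries σ R}

theorem homogeneousComponent_derivation_apply (hD : ∀ i, (a : ℕ∞) ≤ (D (X i)).order)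
    (hg : ((b + 1 : ℕ) : ℕ∞) ≤ g.order) :
    homogeneousComponent (a + b) (D g) =
      homogeneousComponentVF a D (homogeneousComponent (b + 1) g) := by
  conv_lhs => rw [eq_vectorField D, vectorField_apply, map_sum]
  rw [homogeneousComponentVF, vectorField_apply]
  refine Finset.sum_congr rfl fun i _ => ?_
  rw [homogeneousComponent_mul_of_le_order (hD i) (le_order_pderiv hg i),
    homogeneousComponent_pderiv]

theorem homogeneousComponent_derivation_apply_succ (hD : ∀ i, (a : ℕ∞) ≤ (D (X i)).order)
    (hg : ((b + 1 : ℕ) : ℕ∞) ≤ g.order) :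
    homogeneousComponent (a + b + 1) (D g) =
      homogeneousComponentVF a D (homogeneousComponent (b + 2) g) +
        homogeneousComponentVF (a + 1) D (homogeneousComponent (b + 1) g) := by
  conv_lhs => rw [eq_vectorField D, vectorField_apply, map_sum]
  rw [homogeneousComponentVF, vectorField_apply, homogeneousComponentVF, vectorField_apply,
    ← Finset.sum_add_distrib]
  refine Finset.sum_congr rfl fun i _ => ?_
  rw [homogeneousComponent_mul_of_le_order_succ (hD i) (le_order_pderiv hg i),
    homogeneousComponent_pderiv, homogeneousComponent_pderiv]

end OrderedVectorFields

section CommutingVectorFields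

variable {D₁ D₂ : Derivation R (MvPowerSeries σ R) (MvPowerSeries σ R)} {a b : ℕ}
  (hcomm : ∀ f, D₁ (D₂ f) = D₂ (D₁ f)) (h₁ : ∀ i, ((a + 1 : ℕ) : ℕ∞) ≤ (D₁ (X i)).order)
  (h₂ : ∀ i, ((b + 1 : ℕ) : ℕ∞) ≤ (D₂ (X i)).order)
include hcomm h₁ h₂

theorem lie_homogeneousComponentVF_apply_X (i : σ) :
    ⁅homogeneousComponentVF (a + 1) D₁, homogeneousComponentVF (b + 1) D₂⁆ (X i) = 0 := by
  have h := congr(homogeneousComponent (a + 1 + b) $(hcomm (X i)))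
  rw [homogeneousComponent_derivation_apply h₁ (h₂ i), show a + 1 + b = b + 1 + a by omega,
    homogeneousComponent_derivation_apply h₂ (h₁ i)] at h
  rw [Derivation.commutator_apply, sub_eq_zero]
  simpa only [homogeneousComponentVF_X] using h

theorem lie_homogeneousComponentVF_add_lie_apply_X (i : σ) :
    ⁅homogeneousComponentVF (a + 1) D₁, homogeneousComponentVF (b + 2) D₂⁆ (X i) +
      ⁅homogeneousComponentVF (a + 2) D₁, homogeneousComponentVF (b + 1) D₂⁆ (X i) = 0 := by
  have h := congr(homogeneousComponent (a + 1 + b + 1) $(hcomm (X i)))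
  rw [homogeneousComponent_derivation_apply_succ h₁ (h₂ i),
    show a + 1 + b + 1 = b + 1 + a + 1 by omega,
    homogeneousComponent_derivation_apply_succ h₂ (h₁ i)] at h
  simp only [Derivation.commutator_apply, homogeneousComponentVF_X]
  linear_combination h

end CommutingVectorFields

theorem homogeneousComponentVF_eq_smul_radial {m : ℕ}
    {D : Derivation R (MvPowerSeries σ R) (MvPowerSeries σ R)} {f : MvPowerSeries σ R}
    (h : ∀ i, homogeneousComponent m (D (X i)) = f * X i) :
    homogeneousComponentVF m D = f • radial :=
  derivation_ext fun i => by
    rw [homogeneousComponentVF_X, h, Derivation.smul_apply, radial, vectorField_X, smul_eq_mul]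

theorem lie_smul_radial_apply_X {m : ℕ} (f : MvPowerSeries σ R)
    (W : Derivation R (MvPowerSeries σ R) (MvPowerSeries σ R)) {i : σ}
    (hW : (W (X i)).IsHomogeneous (m + 1)) :
    ⁅f • radial (σ := σ) (R := R), W⁆ (X i) = m • (f * W (X i)) - W f * X i := by
  rw [Derivation.commutator_apply, Derivation.smul_apply, Derivation.smul_apply, hW.radial_apply,
    radial, vectorField_X, smul_eq_mul, smul_eq_mul, W.leibniz, smul_eq_mul, smul_eq_mul,
    succ_nsmul, mul_add, mul_smul_comm]
  ring

section CharZeroField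

variable {σ K : Type*} [Fintype σ] [Field K] [CharZero K]

theorem apply_X_eq_zero_of_nsmul_mul_eq {p : MvPowerSeries σ K} {k M : ℕ}
    (hp : p.IsHomogeneous k) (hp0 : p ≠ 0) (hMk : M ≠ k) (hM0 : M ≠ 0)
    {W : Derivation K (MvPowerSeries σ K) (MvPowerSeries σ K)}
    (hW : ∀ i, M • (p * W (X i)) = W p * X i) (i : σ) : W (X i) = 0 := by
  have hWp : W p = 0 := by
    have key : M • (p * W p) = k • (p * W p) :=
      calc M • (p * W p) = ∑ i, M • (p * W (X i)) * pderiv K i p := by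
            conv_lhs => rw [eq_vectorField W, vectorField_apply]
            simp only [Finset.mul_sum, Finset.smul_sum, smul_mul_assoc, mul_assoc]
        _ = W p * radial p := by
            simp only [hW, radial, vectorField_apply, Finset.mul_sum, mul_assoc]
        _ = k • (p * W p) := by rw [hp.radial_apply, mul_smul_comm, mul_comm]
    have h : ((M : K) - k) • (p * W p) = 0 := by
      rw [sub_smul, Nat.cast_smul_eq_nsmul, Nat.cast_smul_eq_nsmul, key, sub_self]
    rcases smul_eq_zero.mp h with h | h
    · exact absurd (sub_eq_zero.mp h) (by exact_mod_cast hMk)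
    · exact (mul_eq_zero.mp h).resolve_left hp0
  have h := hW i
  rw [hWp, zero_mul, ← Nat.cast_smul_eq_nsmul K, smul_eq_zero] at h
  exact (mul_eq_zero.mp (h.resolve_left (by exact_mod_cast hM0))).resolve_left hp0

variable {V W : Derivation K (MvPowerSeries σ K) (MvPowerSeries σ K)} {k : ℕ}

theorem eq_zero_of_commute_of_homogeneousComponentVF_eq_smul_radial {p : MvPowerSeries σ K}
    (hp : p.IsHomogeneous k) (hp0 : p ≠ 0) (hV : ∀ i, ((k + 1 : ℕ) : ℕ∞) ≤ (V (X i)).order)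
    (hV1 : homogeneousComponentVF (k + 1) V = p • radial)
    (hW : ∀ i, ((k + 2 : ℕ) : ℕ∞) ≤ (W (X i)).order) (hcomm : ∀ f, V (W f) = W (V f)) :
    W = 0 := by
  have hord : ∀ M, k + 1 ≤ M → ∀ i, ((M + 1 : ℕ) : ℕ∞) ≤ (W (X i)).order := by
    intro M hM
    induction M, hM using Nat.le_induction with
    | base => exact hW
    | succ M hM ih =>
      have hbracket : ∀ j, M • (p * homogeneousComponentVF (M + 1) W (X j)) =
          homogeneousComponentVF (M + 1) W p * X j := fun j => by
        have h := lie_homogeneousComponentVF_apply_X hcomm hV ih j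
        rw [hV1, lie_smul_radial_apply_X p _ (m := M)
          (by rw [homogeneousComponentVF_X]; exact isHomogeneous_homogeneousComponent _ _)] at h
        exact sub_eq_zero.mp h
      intro i
      refine succ_le_order_of_homogeneousComponent_eq_zero (ih i) ?_
      rw [← homogeneousComponentVF_X]
      exact apply_X_eq_zero_of_nsmul_mul_eq hp hp0 (by omega) (by omega) hbracket i
  refine derivation_ext fun i => ?_
  rw [Derivation.zero_apply, ← order_eq_top_iff, ENat.eq_top_iff_forall_ge]
  exact fun N => le_trans (by norm_cast; omega) (hord (N + k + 1) (by omega) i)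

theorem dvd_of_commute_of_homogeneousComponentVF_eq_smul_radial
    {p p' : MvPolynomial σ K} {q : σ → MvPolynomial σ K}
    (hV : ∀ i, ((k + 1 : ℕ) : ℕ∞) ≤ (V (X i)).order)
    (hW : ∀ i, ((k + 1 : ℕ) : ℕ∞) ≤ (W (X i)).order)
    (hV1 : homogeneousComponentVF (k + 1) V = (p : MvPowerSeries σ K) • radial)
    (hW1 : homogeneousComponentVF (k + 1) W = (p' : MvPowerSeries σ K) • radial)
    (hV2 : ∀ i, homogeneousComponent (k + 2) (V (X i)) = q i)
    (hcomm : ∀ f, V (W f) = W (V f)) {i₀ j₀ : σ}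
    (hcop : IsRelPrime p (MvPolynomial.X j₀ * q i₀ - MvPolynomial.X i₀ * q j₀)) : p ∣ p' := by
  set Q := homogeneousComponentVF (k + 2) V
  set Q' := homogeneousComponentVF (k + 2) W
  have hhom : ∀ (D : Derivation K (MvPowerSeries σ K) (MvPowerSeries σ K)) i,
      (homogeneousComponentVF (k + 2) D (X i)).IsHomogeneous (k + 1 + 1) := fun D i => by
    rw [homogeneousComponentVF_X]
    exact isHomogeneous_homogeneousComponent _ _
  have key : ∀ i, (k + 1) • ((p : MvPowerSeries σ K) * Q' (X i)) - Q' p * X i =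
      (k + 1) • ((p' : MvPowerSeries σ K) * Q (X i)) - Q p' * X i := fun i => by
    have h := lie_homogeneousComponentVF_add_lie_apply_X hcomm hV hW i
    rw [hV1, hW1, ← lie_skew Q, Derivation.neg_apply, lie_smul_radial_apply_X _ _ (hhom W i),
      lie_smul_radial_apply_X _ _ (hhom V i)] at h
    linear_combination h
  obtain ⟨P₀, hP₀⟩ := exists_coe_eq_of_isHomogeneous (hhom W i₀)
  obtain ⟨P₁, hP₁⟩ := exists_coe_eq_of_isHomogeneous (hhom W j₀)
  have hQ : ∀ i, Q (X i) = q i := fun i => (homogeneousComponentVF_X _ _ _).trans (hV2 i)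
  have hcomb : (p : MvPowerSeries σ K) * (X j₀ * Q' (X i₀) - X i₀ * Q' (X j₀)) =
      (p' : MvPowerSeries σ K) * (X j₀ * Q (X i₀) - X i₀ * Q (X j₀)) := by
    have h : ((k + 1 : ℕ) : K) • ((p : MvPowerSeries σ K) * (X j₀ * Q' (X i₀) - X i₀ * Q' (X j₀)) -
        (p' : MvPowerSeries σ K) * (X j₀ * Q (X i₀) - X i₀ * Q (X j₀))) = 0 := by
      simp only [Nat.cast_smul_eq_nsmul, nsmul_eq_mul] at key ⊢
      linear_combination X j₀ * key i₀ - X i₀ * key j₀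
    rw [smul_eq_zero, sub_eq_zero] at h
    exact h.resolve_left (by exact_mod_cast Nat.succ_ne_zero k)
  refine hcop.dvd_of_dvd_mul_right ⟨MvPolynomial.X j₀ * P₀ - MvPolynomial.X i₀ * P₁, ?_⟩
  apply MvPolynomial.coe_injective σ K
  change MvPolynomial.coeToMvPowerSeries.ringHom _ = MvPolynomial.coeToMvPowerSeries.ringHom _
  simp only [map_mul, map_sub, MvPolynomial.coeToMvPowerSeries.ringHom_apply, MvPolynomial.coe_X,
    hP₀, hP₁, ← hQ]
  exact hcomb.symm

end CharZeroField

end MvPowerSeries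

namespace FormalGroups

open MvPowerSeries

theorem homogeneousComponent_eq_mul_Z {n k : ℕ} {X : FVF n} {p : MvPolynomial (Fin n) ℂ}
    (hp : p.IsHomogeneous k)
    (h : ∀ i d, deg d = k + 1 →
      MvPowerSeries.coeff (R := ℂ) d (X (Z i)) = MvPowerSeries.coeff (R := ℂ) d ((p : FPS n) * Z i))
    (i : Fin n) : homogeneousComponent (k + 1) (X (Z i)) = (p : FPS n) * Z i := by
  have hd : ∀ d : Fin n →₀ ℕ, deg d = d.degree := fun _ => rfl
  refine homogeneousComponent_eq ?_ fun d h' => h i d ((hd d).trans h')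
  have h'' : ((p * MvPolynomial.X i : MvPolynomial (Fin n) ℂ) : FPS n).IsHomogeneous (k + 1) :=
    (hp.mul (MvPolynomial.isHomogeneous_X ℂ i)).toMvPowerSeries
  rwa [MvPolynomial.coe_mul, MvPolynomial.coe_X] at h''

theorem dicritic_commuting_is_multiple_general
    (n : ℕ) (k : ℕ) (X Y : FVF n)
    (hX : IsRegDicriticVF X k) (hY : IsDicriticVF Y k)
    (hcomm : CommuteVF X Y) :
    ∃ c : ℂ, c ≠ 0 ∧ Y = c • X := by
  obtain ⟨-, hXord, p, q, hp, hp0, hX1, hq, hX2, i₀, j₀, hcop⟩ := hX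
  obtain ⟨-, hYord, p', hp', hp'0, hY1⟩ := hY
  have hXo : ∀ i, ((k + 1 : ℕ) : ℕ∞) ≤ (X (Z i)).order := fun i => nat_le_order (hXord i)
  have hYo : ∀ i, ((k + 1 : ℕ) : ℕ∞) ≤ (Y (Z i)).order := fun i => nat_le_order (hYord i)
  have hXc := homogeneousComponent_eq_mul_Z hp hX1
  have hYc := homogeneousComponent_eq_mul_Z hp' hY1
  have hXq : ∀ i, homogeneousComponent (k + 2) (X (Z i)) = q i := fun i =>
    homogeneousComponent_eq (hq i).toMvPowerSeries fun d hd => by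
      rw [hX2 i d hd, MvPolynomial.coeff_coe]
  obtain ⟨c, hc0, rfl⟩ := hp.exists_eq_smul_of_dvd hp' hp'0
    (dvd_of_commute_of_homogeneousComponentVF_eq_smul_radial hXo hYo
      (homogeneousComponentVF_eq_smul_radial hXc) (homogeneousComponentVF_eq_smul_radial hYc)
      hXq hcomm hcop)
  have hD : ∀ i, ((k + 2 : ℕ) : ℕ∞) ≤ ((Y - c • X) (Z i)).order := fun i => by
    rw [Derivation.sub_apply, Derivation.smul_apply]
    refine succ_le_order_sub (hYo i) ((hXo i).trans le_order_smul) ?_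
    rw [map_smul, hXc, hYc, MvPolynomial.coe_smul, smul_mul_assoc]
  refine ⟨c, hc0, sub_eq_zero.mp ?_⟩
  refine eq_zero_of_commute_of_homogeneousComponentVF_eq_smul_radial hp.toMvPowerSeries
    (by exact_mod_cast hp0) hXo (homogeneousComponentVF_eq_smul_radial hXc) hD fun f => ?_
  simp only [Derivation.sub_apply, Derivation.smul_apply, Derivation.map_sub, Derivation.map_smul,
    hcomm f]

/-- if `X̂` is regular dicritic, `Ŷ` is dicritic, both of the same
order `k+1`, and `[X̂,Ŷ] = 0`, then `Ŷ = c X̂` for some `c ≠ 0`. -/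
theorem dicritic_commuting_is_multiple
    (n : ℕ) (k : ℕ) (hk : 1 ≤ k) (X Y : FVF n)
    (hX : IsRegDicriticVF X k) (hY : IsDicriticVF Y k)
    (hcomm : CommuteVF X Y) :
    ∃ c : ℂ, c ≠ 0 ∧ Y = c • X :=
  dicritic_commuting_is_multiple_general n k X Y hX hY hcomm

end FormalGroups
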